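/- arXiv:2312.05905 — 3 statements merged into one kernel-verified Lean document; each statement's English description precedes it below -/
import Mathlib

section
/- Let G be a finite simple graph on n vertices that is strongly regular with parameters (n, d, λ, μ) with μ ≥ 1. Then for every vertex v, the depth-2 ELENE encoding of v is the multiset consisting of the quadruplet (0, 0, d, d) with multiplicity 1, the quadruplet (1, 1, d, d − λ − 1) with multiplicity d, and the quadruplet (2, μ, d, 0) with multiplicity n − d − 1; in particular, all vertices of G have the same depth-2 ELENE encoding. -/
open Classical in
/-- The closed `k`-ball `B_k(v) = {u | dist_G(u, v) ≤ k}` (as a finset of vertices that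
are reachable from `v` within distance `k`). -/
noncomputable def kball {V : Type*} [Fintype V] (G : SimpleGraph V) (v : V) (k : ℕ) :
    Finset V :=
  Finset.univ.filter fun u => G.Reachable u v ∧ G.dist u v ≤ k

open Classical in
/-- `d⁻(u|v)`: number of neighbors `w ∈ B_k(v)` of `u` with `dist_G(w, v) = dist_G(u, v) - 1`. -/
noncomputable def dMinus {V : Type*} [Fintype V] (G : SimpleGraph V) (v : V) (k : ℕ)
    (u : V) : ℕ :=
  ((kball G v k).filter fun w => G.Adj u w ∧ G.dist w v = G.dist u v - 1).card

open Classical in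
/-- `d⁰(u|v)`: number of neighbors `w ∈ B_k(v)` of `u` with `dist_G(w, v) = dist_G(u, v)`. -/
noncomputable def dZero {V : Type*} [Fintype V] (G : SimpleGraph V) (v : V) (k : ℕ)
    (u : V) : ℕ :=
  ((kball G v k).filter fun w => G.Adj u w ∧ G.dist w v = G.dist u v).card

open Classical in
/-- `d⁺(u|v)`: number of neighbors `w ∈ B_k(v)` of `u` with `dist_G(w, v) = dist_G(u, v) + 1`. -/
noncomputable def dPlus {V : Type*} [Fintype V] (G : SimpleGraph V) (v : V) (k : ℕ)
    (u : V) : ℕ :=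
  ((kball G v k).filter fun w => G.Adj u w ∧ G.dist w v = G.dist u v + 1).card

/-- `d_S(u|v) = d⁻(u|v) + d⁰(u|v) + d⁺(u|v)`, the degree of `u` in the subgraph induced
on `B_k(v)`. -/
noncomputable def dSub {V : Type*} [Fintype V] (G : SimpleGraph V) (v : V) (k : ℕ)
    (u : V) : ℕ :=
  dMinus G v k u + dZero G v k u + dPlus G v k u

/-- The depth-`k` (node-centric) ELENE encoding of `v`: the multiset of quadruplets
`(dist_G(u, v), d⁻(u|v), d_S(u|v), d⁺(u|v))` over all `u ∈ B_k(v)`. -/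
noncomputable def elene {V : Type*} [Fintype V] (G : SimpleGraph V) (k : ℕ) (v : V) :
    Multiset (ℕ × ℕ × ℕ × ℕ) :=
  (kball G v k).val.map fun u => (G.dist u v, dMinus G v k u, dSub G v k u, dPlus G v k u)


open Finset SimpleGraph

section
variable {V : Type*} [Fintype V] {G : SimpleGraph V} [DecidableRel G.Adj]
variable {n d l m : ℕ}

lemma aux_reach (h : G.IsSRGWith n d l m) (hm : 1 ≤ m) (u v : V) :
    G.Reachable u v ∧ G.dist u v ≤ 2 := by
  by_cases huv : u = v
  · subst huv; exact ⟨.refl u, by rw [SimpleGraph.dist_self]; omega⟩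
  by_cases ha : G.Adj u v
  · exact ⟨ha.reachable, le_trans (SimpleGraph.dist_le ha.toWalk) (by simp)⟩
  · have hc : Fintype.card (G.commonNeighbors u v) = m := h.of_not_adj huv ha
    have hpos : 0 < Fintype.card (G.commonNeighbors u v) := by omega
    obtain ⟨x, hx⟩ := Fintype.card_pos_iff.mp hpos
    rw [SimpleGraph.mem_commonNeighbors] at hx
    exact ⟨(SimpleGraph.Walk.cons hx.1 (.cons hx.2.symm .nil)).reachable,
      le_trans (SimpleGraph.dist_le (.cons hx.1 (.cons hx.2.symm .nil))) (by simp)⟩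

lemma aux_kball (h : G.IsSRGWith n d l m) (hm : 1 ≤ m) (v : V) :
    kball G v 2 = Finset.univ := by
  ext u
  simp [kball, aux_reach h hm u v]

lemma aux_dist0 (h : G.IsSRGWith n d l m) (hm : 1 ≤ m) {u v : V} :
    G.dist u v = 0 ↔ u = v := by
  constructor
  · intro h0
    rcases SimpleGraph.dist_eq_zero_iff_eq_or_not_reachable.mp h0 with he | hr
    · exact he
    · exact absurd (aux_reach h hm u v).1 hr
  · rintro rfl; exact SimpleGraph.dist_self

lemma aux_dist2 (h : G.IsSRGWith n d l m) (hm : 1 ≤ m) {u v : V} :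
    G.dist u v = 2 ↔ u ≠ v ∧ ¬G.Adj u v := by
  have hle := (aux_reach h hm u v).2
  have h0 := aux_dist0 h hm (u := u) (v := v)
  have h1 : G.dist u v = 1 ↔ G.Adj u v := SimpleGraph.dist_eq_one_iff_adj
  constructor
  · intro h2
    refine ⟨fun he => ?_, fun ha => ?_⟩
    · have := h0.mpr he; omega
    · have := h1.mpr ha; omega
  · rintro ⟨hne, hna⟩
    have e0 : G.dist u v ≠ 0 := fun hh => hne (h0.mp hh)
    have e1 : G.dist u v ≠ 1 := fun hh => hna (h1.mp hh)
    omega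

lemma aux_common (u v : V) :
    (Finset.univ.filter fun w => G.Adj u w ∧ G.Adj w v).card
      = Fintype.card (G.commonNeighbors u v) := by
  classical
  rw [← Set.toFinset_card]
  have e : (Finset.univ.filter fun w => G.Adj u w ∧ G.Adj w v)
      = (G.commonNeighbors u v).toFinset := by
    ext w
    simp [SimpleGraph.mem_commonNeighbors, G.adj_comm]
  rw [e]

lemma aux_deg (h : G.IsSRGWith n d l m) (u : V) :
    (Finset.univ.filter fun w => G.Adj u w).card = d := by
  have e : (Finset.univ.filter fun w => G.Adj u w) = G.neighborFinset u := by
    ext w; simp [SimpleGraph.mem_neighborFinset]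
  rw [e]
  exact h.regular u

end

section
variable {V : Type*} [Fintype V] {G : SimpleGraph V} [DecidableRel G.Adj]
variable {n d l m : ℕ}

open Classical

lemma card_filter_univ {p : V → Prop} {ip : DecidablePred p} {t : Finset V}
    (hpt : ∀ w, p w ↔ w ∈ t) : (@Finset.filter V p ip Finset.univ).card = t.card := by
  congr 1
  ext w
  simp [hpt]

lemma nbr_split (h : G.IsSRGWith n d l m) {u v : V} (ha : G.Adj u v) :
    1 + l + ((Finset.univ.filter fun w => G.Adj u w).filter
      fun w => ¬w = v ∧ ¬G.Adj w v).card = d := by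
  have h1 := Finset.card_filter_add_card_filter_not
    (s := Finset.univ.filter fun w => G.Adj u w) (p := fun w => w = v)
  have h2 := Finset.card_filter_add_card_filter_not
    (s := (Finset.univ.filter fun w => G.Adj u w).filter fun w => ¬w = v)
    (p := fun w => G.Adj w v)
  have e1 : ((Finset.univ.filter fun w => G.Adj u w).filter fun w => w = v).card = 1 := by
    have e : ((Finset.univ.filter fun w => G.Adj u w).filter fun w => w = v) = {v} := by
      ext w
      simp only [Finset.mem_filter, Finset.mem_univ, true_and, Finset.mem_singleton]
      constructor
      · rintro ⟨_, rfl⟩; rfl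
      · rintro rfl; exact ⟨ha, rfl⟩
    rw [e, Finset.card_singleton]
  have e2 : (((Finset.univ.filter fun w => G.Adj u w).filter fun w => ¬w = v).filter
      fun w => G.Adj w v).card = l := by
    have e : (((Finset.univ.filter fun w => G.Adj u w).filter fun w => ¬w = v).filter
        fun w => G.Adj w v) = Finset.univ.filter fun w => G.Adj u w ∧ G.Adj w v := by
      ext w
      simp only [Finset.mem_filter, Finset.mem_univ, true_and]
      constructor
      · rintro ⟨⟨hw1, _⟩, hw2⟩; exact ⟨hw1, hw2⟩
      · rintro ⟨hw1, hw2⟩; exact ⟨⟨hw1, fun he => G.irrefl (he ▸ hw2)⟩, hw2⟩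
    rw [e, aux_common, h.of_adj u v ha]
  have e3 : (((Finset.univ.filter fun w => G.Adj u w).filter fun w => ¬w = v).filter
      fun w => ¬G.Adj w v).card
      = ((Finset.univ.filter fun w => G.Adj u w).filter fun w => ¬w = v ∧ ¬G.Adj w v).card := by
    congr 1
    ext w
    simp only [Finset.mem_filter, Finset.mem_univ, true_and]
    tauto
  have e4 : (Finset.univ.filter fun w => G.Adj u w).card = d := aux_deg h u
  omega

lemma far_split (h : G.IsSRGWith n d l m) {u v : V} (hne : u ≠ v)
    (hna : ¬G.Adj u v) :
    m + ((Finset.univ.filter fun w => G.Adj u w).filter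
      fun w => ¬w = v ∧ ¬G.Adj w v).card = d := by
  have h1 := Finset.card_filter_add_card_filter_not
    (s := Finset.univ.filter fun w => G.Adj u w) (p := fun w => G.Adj w v)
  have e1 : ((Finset.univ.filter fun w => G.Adj u w).filter fun w => G.Adj w v).card = m := by
    have e : ((Finset.univ.filter fun w => G.Adj u w).filter fun w => G.Adj w v)
        = Finset.univ.filter fun w => G.Adj u w ∧ G.Adj w v := by
      ext w
      simp only [Finset.mem_filter, Finset.mem_univ, true_and]
    rw [e, aux_common, h.of_not_adj hne hna]
  have e2 : ((Finset.univ.filter fun w => G.Adj u w).filter fun w => ¬G.Adj w v).card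
      = ((Finset.univ.filter fun w => G.Adj u w).filter
        fun w => ¬w = v ∧ ¬G.Adj w v).card := by
    congr 1
    ext w
    simp only [Finset.mem_filter, Finset.mem_univ, true_and]
    constructor
    · rintro ⟨hw1, hw2⟩
      exact ⟨hw1, fun he => hna (he ▸ hw1), hw2⟩
    · rintro ⟨hw1, _, hw2⟩; exact ⟨hw1, hw2⟩
  have e4 : (Finset.univ.filter fun w => G.Adj u w).card = d := aux_deg h u
  omega

end

section
variable {V : Type*} [Fintype V] {G : SimpleGraph V} [DecidableRel G.Adj]
variable {n d l m : ℕ}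
open Classical

lemma center_vals (h : G.IsSRGWith n d l m) (hm : 1 ≤ m) (v : V) :
    dMinus G v 2 v = 0 ∧ dZero G v 2 v = 0 ∧ dPlus G v 2 v = d := by
  refine ⟨?_, ?_, ?_⟩
  · unfold dMinus
    rw [aux_kball h hm v]
    refine (card_filter_univ (t := (∅ : Finset V)) ?_).trans Finset.card_empty
    intro w
    simp only [Finset.notMem_empty, iff_false, not_and]
    intro hadj hd
    rw [SimpleGraph.dist_self] at hd
    have hw : w = v := (aux_dist0 h hm).mp (by omega)
    exact G.irrefl (hw ▸ hadj)
  · unfold dZero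
    rw [aux_kball h hm v]
    refine (card_filter_univ (t := (∅ : Finset V)) ?_).trans Finset.card_empty
    intro w
    simp only [Finset.notMem_empty, iff_false, not_and]
    intro hadj hd
    rw [SimpleGraph.dist_self] at hd
    have hw : w = v := (aux_dist0 h hm).mp hd
    exact G.irrefl (hw ▸ hadj)
  · unfold dPlus
    rw [aux_kball h hm v]
    refine (card_filter_univ (t := G.neighborFinset v) ?_).trans (h.regular v)
    intro w
    rw [SimpleGraph.mem_neighborFinset]
    constructor
    · exact fun hw => hw.1
    · intro hadj
      refine ⟨hadj, ?_⟩
      rw [SimpleGraph.dist_self]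
      exact (SimpleGraph.dist_eq_one_iff_adj (G := G)).mpr (G.adj_symm hadj)

lemma nbr_vals (h : G.IsSRGWith n d l m) (hm : 1 ≤ m) {u v : V} (ha : G.Adj u v) :
    dMinus G v 2 u = 1 ∧ dZero G v 2 u = l ∧ dPlus G v 2 u = d - l - 1 := by
  have hd1 : G.dist u v = 1 := (SimpleGraph.dist_eq_one_iff_adj (G := G)).mpr ha
  refine ⟨?_, ?_, ?_⟩
  · unfold dMinus
    rw [aux_kball h hm v]
    refine (card_filter_univ (t := ({v} : Finset V)) ?_).trans (Finset.card_singleton v)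
    intro w
    rw [Finset.mem_singleton]
    constructor
    · rintro ⟨hadj, hd⟩
      rw [hd1] at hd
      exact (aux_dist0 h hm).mp (by omega)
    · rintro rfl
      refine ⟨ha, ?_⟩
      rw [hd1, SimpleGraph.dist_self]
  · unfold dZero
    rw [aux_kball h hm v]
    refine (card_filter_univ (t := (G.commonNeighbors u v).toFinset) ?_).trans ?_
    · intro w
      rw [Set.mem_toFinset, SimpleGraph.mem_commonNeighbors]
      constructor
      · rintro ⟨hadj, hd⟩
        rw [hd1] at hd
        exact ⟨hadj, ((SimpleGraph.dist_eq_one_iff_adj (G := G)).mp hd).symm⟩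
      · rintro ⟨hadj, hvw⟩
        exact ⟨hadj, by rw [hd1]; exact (SimpleGraph.dist_eq_one_iff_adj (G := G)).mpr hvw.symm⟩
    · rw [Set.toFinset_card]; exact h.of_adj u v ha
  · unfold dPlus
    rw [aux_kball h hm v]
    refine (card_filter_univ
      (t := (Finset.univ.filter fun w => G.Adj u w).filter fun w => ¬w = v ∧ ¬G.Adj w v)
      ?_).trans ?_
    · intro w
      simp only [Finset.mem_filter, Finset.mem_univ, true_and]
      constructor
      · rintro ⟨hadj, hd⟩
        rw [hd1] at hd
        have h2 := (aux_dist2 h hm (u := w) (v := v)).mp (by omega)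
        exact ⟨hadj, h2.1, h2.2⟩
      · rintro ⟨hadj, hne, hna⟩
        refine ⟨hadj, ?_⟩
        rw [hd1]
        exact (aux_dist2 h hm).mpr ⟨hne, hna⟩
    · have hs := nbr_split h ha
      omega

lemma far_vals (h : G.IsSRGWith n d l m) (hm : 1 ≤ m) {u v : V} (hne : u ≠ v)
    (hna : ¬G.Adj u v) :
    dMinus G v 2 u = m ∧ dZero G v 2 u = d - m ∧ dPlus G v 2 u = 0 := by
  have hd2 : G.dist u v = 2 := (aux_dist2 h hm).mpr ⟨hne, hna⟩
  refine ⟨?_, ?_, ?_⟩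
  · unfold dMinus
    rw [aux_kball h hm v]
    refine (card_filter_univ (t := (G.commonNeighbors u v).toFinset) ?_).trans ?_
    · intro w
      rw [Set.mem_toFinset, SimpleGraph.mem_commonNeighbors]
      constructor
      · rintro ⟨hadj, hd⟩
        rw [hd2] at hd
        have hd' : G.dist w v = 1 := by omega
        exact ⟨hadj, ((SimpleGraph.dist_eq_one_iff_adj (G := G)).mp hd').symm⟩
      · rintro ⟨hadj, hvw⟩
        refine ⟨hadj, ?_⟩
        rw [hd2]
        exact (SimpleGraph.dist_eq_one_iff_adj (G := G)).mpr hvw.symm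
    · rw [Set.toFinset_card]; exact h.of_not_adj hne hna
  · unfold dZero
    rw [aux_kball h hm v]
    refine (card_filter_univ
      (t := (Finset.univ.filter fun w => G.Adj u w).filter fun w => ¬w = v ∧ ¬G.Adj w v)
      ?_).trans ?_
    · intro w
      simp only [Finset.mem_filter, Finset.mem_univ, true_and]
      constructor
      · rintro ⟨hadj, hd⟩
        rw [hd2] at hd
        have h2 := (aux_dist2 h hm (u := w) (v := v)).mp hd
        exact ⟨hadj, h2.1, h2.2⟩
      · rintro ⟨hadj, hw1, hw2⟩
        refine ⟨hadj, ?_⟩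
        rw [hd2]
        exact (aux_dist2 h hm).mpr ⟨hw1, hw2⟩
    · have hs := far_split h hne hna
      omega
  · unfold dPlus
    rw [aux_kball h hm v]
    refine (card_filter_univ (t := (∅ : Finset V)) ?_).trans Finset.card_empty
    intro w
    simp only [Finset.notMem_empty, iff_false, not_and]
    intro hadj hd
    rw [hd2] at hd
    have := (aux_reach h hm w v).2
    omega

lemma center_tuple (h : G.IsSRGWith n d l m) (hm : 1 ≤ m) (v : V) :
    (G.dist v v, dMinus G v 2 v, dSub G v 2 v, dPlus G v 2 v) = (0, 0, d, d) := by
  obtain ⟨a, b, c⟩ := center_vals h hm v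
  unfold dSub
  rw [SimpleGraph.dist_self, a, b, c]
  simp only [Prod.mk.injEq, true_and, and_true]
  omega

lemma nbr_tuple (h : G.IsSRGWith n d l m) (hm : 1 ≤ m) {u v : V} (ha : G.Adj u v) :
    (G.dist u v, dMinus G v 2 u, dSub G v 2 u, dPlus G v 2 u) = (1, 1, d, d - l - 1) := by
  obtain ⟨a, b, c⟩ := nbr_vals h hm ha
  have hs := nbr_split h ha
  unfold dSub
  rw [(SimpleGraph.dist_eq_one_iff_adj (G := G)).mpr ha, a, b, c]
  simp only [Prod.mk.injEq, true_and, and_true]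
  omega

lemma far_tuple (h : G.IsSRGWith n d l m) (hm : 1 ≤ m) {u v : V} (hne : u ≠ v)
    (hna : ¬G.Adj u v) :
    (G.dist u v, dMinus G v 2 u, dSub G v 2 u, dPlus G v 2 u) = (2, m, d, 0) := by
  obtain ⟨a, b, c⟩ := far_vals h hm hne hna
  have hs := far_split h hne hna
  unfold dSub
  rw [(aux_dist2 h hm).mpr ⟨hne, hna⟩, a, b, c]
  simp only [Prod.mk.injEq, true_and, and_true]
  omega

end

lemma myDisjUnion_val {α : Type*} (s t : Finset α) (hst : Disjoint s t) :
    (s.disjUnion t hst).val = s.val + t.val := rfl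

/-- In a strongly regular graph on `n` vertices with parameters
`(n, d, l, m)`, `m ≥ 1`, the depth-2 ELENE encoding of every vertex `v` is the multiset
with `(0, 0, d, d)` once, `(1, 1, d, d - l - 1)` with multiplicity `d`, and
`(2, m, d, 0)` with multiplicity `n - d - 1`; in particular all vertices have the same
depth-2 ELENE encoding. -/
theorem srg_elene_two {V : Type*} [Fintype V] {G : SimpleGraph V} [DecidableRel G.Adj]
    {n d l m : ℕ} (h : G.IsSRGWith n d l m) (hm : 1 ≤ m) :
    (∀ v : V, elene G 2 v =
      Multiset.replicate 1 (0, 0, d, d) +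
      Multiset.replicate d (1, 1, d, d - l - 1) +
      Multiset.replicate (n - d - 1) (2, m, d, 0)) ∧
    (∀ v w : V, elene G 2 v = elene G 2 w) := by
  classical
  have main : ∀ v : V, elene G 2 v =
      Multiset.replicate 1 (0, 0, d, d) +
      Multiset.replicate d (1, 1, d, d - l - 1) +
      Multiset.replicate (n - d - 1) (2, m, d, 0) := by
    intro v
    have hdisj1 : Disjoint ({v} : Finset V) (G.neighborFinset v) := by
      rw [Finset.disjoint_left]
      intro a ha hb
      rw [Finset.mem_singleton] at ha
      subst ha
      rw [SimpleGraph.mem_neighborFinset] at hb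
      exact G.irrefl hb
    set R := Finset.univ.filter (fun u => ¬u = v ∧ ¬G.Adj v u) with hR
    have hdisj2 : Disjoint (({v} : Finset V).disjUnion (G.neighborFinset v) hdisj1) R := by
      rw [Finset.disjoint_left]
      intro a ha hb
      rw [Finset.mem_disjUnion, Finset.mem_singleton, SimpleGraph.mem_neighborFinset] at ha
      rw [hR, Finset.mem_filter] at hb
      tauto
    have huniv : (Finset.univ : Finset V)
        = (({v} : Finset V).disjUnion (G.neighborFinset v) hdisj1).disjUnion R hdisj2 := by
      ext a
      rw [Finset.mem_disjUnion, Finset.mem_disjUnion, Finset.mem_singleton,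
        SimpleGraph.mem_neighborFinset, hR, Finset.mem_filter]
      simp only [Finset.mem_univ, true_and, iff_true]
      tauto
    have hdeg : (G.neighborFinset v).card = d := h.regular v
    have hcardR : R.card = n - d - 1 := by
      have h1 := congrArg Finset.card huniv
      rw [Finset.card_disjUnion, Finset.card_disjUnion, Finset.card_singleton,
        Finset.card_univ, h.card, hdeg] at h1
      omega
    unfold elene
    rw [aux_kball h hm v, huniv]
    simp only [myDisjUnion_val, Multiset.map_add]
    congr 1
    · congr 1
      · rw [Finset.singleton_val, Multiset.map_singleton, center_tuple h hm v,
          Multiset.replicate_one]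
      · refine Multiset.eq_replicate.mpr ⟨?_, ?_⟩
        · rw [Multiset.card_map]
          exact hdeg
        · intro b hb
          obtain ⟨u, hu, rfl⟩ := Multiset.mem_map.mp hb
          have hadj : G.Adj v u := by
            rw [← SimpleGraph.mem_neighborFinset]
            exact hu
          exact nbr_tuple h hm hadj.symm
    · refine Multiset.eq_replicate.mpr ⟨?_, ?_⟩
      · rw [Multiset.card_map]
        exact hcardR
      · intro b hb
        obtain ⟨u, hu, rfl⟩ := Multiset.mem_map.mp hb
        have hu' : u ∈ R := hu
        rw [hR, Finset.mem_filter] at hu'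
        exact far_tuple h hm hu'.2.1 (fun hadj => hu'.2.2 hadj.symm)
  exact ⟨main, fun v w => (main v).trans (main w).symm⟩
end

section
/- Let G and G' be finite simple graphs, both strongly regular with the same parameters (n, d, λ, μ) with μ ≥ 1. Then every vertex v of G and every vertex v' of G' have equal depth-2 ELENE encodings; i.e., node-level ELENE (node-centric) encodings cannot distinguish non-isomorphic strongly regular graphs with equal parameters. -/
/-! In a strongly regular graph with `μ ≥ 1` any two non-adjacent vertices have a common
neighbour, so the graph has diameter at most `2` and the depth-2 ball is the whole vertex set.
The ELENE quadruple of a vertex then depends only on its distance `r` to the root: it is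
`(0, 0, d, d)` for the root, `(1, 1, d, d - 1 - λ)` for a neighbour (which shares `λ` neighbours
with the root), and `(2, μ, d, 0)` at distance `2`. These distance classes have sizes `1`, `d` and
`n - 1 - d`, so the encoding is determined by the parameters. -/

open Finset

namespace SimpleGraph

variable {V : Type*} [Fintype V] (G : SimpleGraph V) {u v : V} {k : ℕ}

theorem mem_kball : u ∈ kball G v k ↔ G.Reachable u v ∧ G.dist u v ≤ k := by
  simp [kball]

theorem dSub_eq_card_filter_adj [DecidableRel G.Adj] :
    dSub G v k u = #{w ∈ kball G v k | G.Adj u w} := by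
  simp only [dSub, dMinus, dZero, dPlus, card_filter, ← sum_add_distrib]
  refine sum_congr rfl fun w hw => ?_
  by_cases huw : G.Adj u w
  · have hstep := huw.symm.diff_dist_adj (u := v)
    rw [dist_comm, dist_comm (u := v)] at hstep
    -- the `d⁻` and `d⁰` conditions coincide (truncated subtraction) only when `u = v`, and
    -- then no neighbour of `u` is at distance `0`
    have hw0 : G.dist u v = 0 → G.dist w v ≠ 0 := fun hu hw' => by
      have hwv := ((G.mem_kball.1 hw).1.dist_eq_zero_iff).1 hw'
      have huv := ((huw.reachable.trans (G.mem_kball.1 hw).1).dist_eq_zero_iff).1 hu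
      exact G.loopless.irrefl w (by rwa [huv, ← hwv] at huw)
    simp only [huw, true_and, if_true]
    split_ifs <;> omega
  · simp [huw]

theorem dMinus_self : dMinus G v k v = 0 := by
  classical
  rw [dMinus, card_eq_zero, filter_eq_empty_iff]
  rintro w hw ⟨hvw, hwv⟩
  rw [dist_self, ((G.mem_kball.1 hw).1.dist_eq_zero_iff)] at hwv
  exact G.loopless.irrefl v (hwv ▸ hvw)

theorem dMinus_of_adj (huv : G.Adj u v) : dMinus G v k u = 1 := by
  classical
  rw [dMinus, card_eq_one]
  refine ⟨v, eq_singleton_iff_unique_mem.2 ⟨?_, fun w hw => ?_⟩⟩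
  · simp [mem_kball, huv, dist_eq_one_iff_adj.2 huv]
  · rw [mem_filter, mem_kball, dist_eq_one_iff_adj.2 huv] at hw
    exact hw.1.1.dist_eq_zero_iff.1 hw.2.2

theorem card_filter_adj_dist_eq_one [DecidableRel G.Adj] (hk : 1 ≤ k) :
    #{w ∈ kball G v k | G.Adj u w ∧ G.dist w v = 1} = Fintype.card (G.commonNeighbors u v) := by
  rw [← Set.toFinset_card]
  congr 1
  ext w
  simp only [mem_filter, mem_kball, dist_eq_one_iff_adj, Set.mem_toFinset, mem_commonNeighbors]
  constructor
  · rintro ⟨-, huw, hwv⟩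
    exact ⟨huw, hwv.symm⟩
  · rintro ⟨huw, hvw⟩
    exact ⟨⟨hvw.symm.reachable, by simpa [dist_eq_one_iff_adj.2 hvw.symm]⟩, huw, hvw.symm⟩

theorem dZero_self : dZero G v k v = 0 := by
  rw [dZero, dist_self]
  have hminus := G.dMinus_self (v := v) (k := k)
  rwa [dMinus, dist_self, zero_tsub] at hminus

theorem dZero_of_adj [DecidableRel G.Adj] (hk : 1 ≤ k) (huv : G.Adj u v) :
    dZero G v k u = Fintype.card (G.commonNeighbors u v) := by
  rw [← G.card_filter_adj_dist_eq_one hk, dZero, dist_eq_one_iff_adj.2 huv]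
  congr

theorem dMinus_of_dist_eq_two [DecidableRel G.Adj] (hk : 1 ≤ k) (huv : G.dist u v = 2) :
    dMinus G v k u = Fintype.card (G.commonNeighbors u v) := by
  rw [← G.card_filter_adj_dist_eq_one hk, dMinus, huv]
  congr

theorem dPlus_of_dist_eq (huv : G.dist u v = k) : dPlus G v k u = 0 := by
  classical
  rw [dPlus, card_eq_zero, filter_eq_empty_iff]
  rintro w hw ⟨-, hwv⟩
  have := (G.mem_kball.1 hw).2
  omega

/-- The ELENE quadruple of a vertex at distance `r` from the root of a strongly regular graph with
`μ ≥ 1`; its diameter is at most `2`, so the last case is `r = 2`. -/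
def srgEleneTuple (d l m : ℕ) : ℕ → ℕ × ℕ × ℕ × ℕ
  | 0 => (0, 0, d, d)
  | 1 => (1, 1, d, d - 1 - l)
  | _ => (2, m, d, 0)

namespace IsSRGWith

variable {G} [DecidableRel G.Adj] {n d l m : ℕ}

theorem exists_walk_length_le_two (h : G.IsSRGWith n d l m) (hm : 1 ≤ m) (u v : V) :
    ∃ p : G.Walk u v, p.length ≤ 2 := by
  by_cases huv : u = v
  · subst huv
    exact ⟨.nil, by simp⟩
  by_cases hadj : G.Adj u v
  · exact ⟨hadj.toWalk, by simp⟩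
  obtain ⟨w, hw⟩ : (G.commonNeighbors u v).Nonempty := by
    rw [← Set.toFinset_nonempty, ← card_pos, Set.toFinset_card, h.of_not_adj huv hadj]
    exact hm
  rw [mem_commonNeighbors] at hw
  exact ⟨.cons hw.1 (.cons hw.2.symm .nil), by simp⟩

theorem reachable (h : G.IsSRGWith n d l m) (hm : 1 ≤ m) (u v : V) : G.Reachable u v :=
  (h.exists_walk_length_le_two hm u v).elim fun p _ => p.reachable

theorem dist_le_two (h : G.IsSRGWith n d l m) (hm : 1 ≤ m) (u v : V) : G.dist u v ≤ 2 :=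
  (h.exists_walk_length_le_two hm u v).elim fun p hp => (dist_le p).trans hp

theorem kball_two_eq_univ (h : G.IsSRGWith n d l m) (hm : 1 ≤ m) (v : V) :
    kball G v 2 = univ :=
  eq_univ_of_forall fun u => G.mem_kball.2 ⟨h.reachable hm u v, h.dist_le_two hm u v⟩

theorem eleneTuple_eq_srgEleneTuple (h : G.IsSRGWith n d l m) (hm : 1 ≤ m) (u v : V) :
    (G.dist u v, dMinus G v 2 u, dSub G v 2 u, dPlus G v 2 u) =
      srgEleneTuple d l m (G.dist u v) := by
  have hsub : dMinus G v 2 u + dZero G v 2 u + dPlus G v 2 u = d := by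
    rw [← dSub, dSub_eq_card_filter_adj, h.kball_two_eq_univ hm, ← neighborFinset_eq_filter]
    exact h.regular u
  obtain huv | huv | huv : G.dist u v = 0 ∨ G.dist u v = 1 ∨ G.dist u v = 2 := by
    have := h.dist_le_two hm u v
    omega
  · obtain rfl := (h.reachable hm u v).dist_eq_zero_iff.1 huv
    simp only [dSub, huv, srgEleneTuple, dMinus_self, dZero_self, Prod.mk.injEq, true_and] at hsub ⊢
    omega
  · have hadj := dist_eq_one_iff_adj.1 huv
    have hzero := G.dZero_of_adj one_le_two hadj
    rw [h.of_adj u v hadj] at hzero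
    simp only [dSub, huv, srgEleneTuple, dMinus_of_adj G hadj, hzero, Prod.mk.injEq,
      true_and] at hsub ⊢
    omega
  · have hne : u ≠ v := by rintro rfl; simp at huv
    have hadj : ¬ G.Adj u v := by rintro hadj; simp [dist_eq_one_iff_adj.2 hadj] at huv
    have hminus := G.dMinus_of_dist_eq_two one_le_two huv
    rw [h.of_not_adj hne hadj] at hminus
    simp only [dSub, huv, srgEleneTuple, hminus, G.dPlus_of_dist_eq huv,
      Prod.mk.injEq, true_and, and_true] at hsub ⊢
    omega

theorem elene_two_eq_map_dist (h : G.IsSRGWith n d l m) (hm : 1 ≤ m) (v : V) :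
    elene G 2 v = (univ.val.map (G.dist · v)).map (srgEleneTuple d l m) := by
  rw [elene, h.kball_two_eq_univ hm, Multiset.map_map]
  exact Multiset.map_congr rfl fun u _ => h.eleneTuple_eq_srgEleneTuple hm u v

theorem card_filter_dist_eq_zero (h : G.IsSRGWith n d l m) (hm : 1 ≤ m) (v : V) :
    #{u | G.dist u v = 0} = 1 := by
  rw [card_eq_one]
  exact ⟨v, by ext u; simp [(h.reachable hm u v).dist_eq_zero_iff]⟩

theorem card_filter_dist_eq_one (h : G.IsSRGWith n d l m) (v : V) :
    #{u | G.dist u v = 1} = d := by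
  rw [← h.regular v, ← card_neighborFinset_eq_degree, neighborFinset_eq_filter]
  simp only [dist_eq_one_iff_adj, adj_comm]

theorem card_filter_dist_eq_two (h : G.IsSRGWith n d l m) (hm : 1 ≤ m) (v : V) :
    #{u | G.dist u v = 2} = n - 1 - d := by
  have hsum : #(univ : Finset V) = ∑ r ∈ range 3, #{u | G.dist u v = r} :=
    card_eq_sum_card_fiberwise fun u _ => mem_range.2 (Nat.lt_succ_of_le (h.dist_le_two hm u v))
  rw [card_univ, h.card, sum_range_succ, sum_range_succ, sum_range_one,
    h.card_filter_dist_eq_zero hm, h.card_filter_dist_eq_one] at hsum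
  omega

theorem card_filter_dist_eq_of_two_lt (h : G.IsSRGWith n d l m) (hm : 1 ≤ m) (v : V) {r : ℕ}
    (hr : 2 < r) : #{u | G.dist u v = r} = 0 := by
  rw [card_eq_zero, filter_eq_empty_iff]
  intro u _ hu
  have := h.dist_le_two hm u v
  omega

theorem map_dist_eq_map_dist {V' : Type*} [Fintype V'] {G' : SimpleGraph V'}
    [DecidableRel G'.Adj] (h : G.IsSRGWith n d l m) (h' : G'.IsSRGWith n d l m) (hm : 1 ≤ m)
    (v : V) (v' : V') : univ.val.map (G.dist · v) = univ.val.map (G'.dist · v') := by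
  ext r
  simp only [Multiset.count_map, eq_comm (a := r)]
  change #{u | G.dist u v = r} = #{u | G'.dist u v' = r}
  obtain _ | _ | _ | r := r
  · rw [h.card_filter_dist_eq_zero hm, h'.card_filter_dist_eq_zero hm]
  · rw [h.card_filter_dist_eq_one, h'.card_filter_dist_eq_one]
  · rw [h.card_filter_dist_eq_two hm, h'.card_filter_dist_eq_two hm]
  · rw [h.card_filter_dist_eq_of_two_lt hm v (by omega),
      h'.card_filter_dist_eq_of_two_lt hm v' (by omega)]

end IsSRGWith

end SimpleGraph

/-- If `G` and `G'` are both strongly regular with the same parameters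
`(n, d, l, m)`, `m ≥ 1`, then every vertex `v` of `G` and every vertex `v'` of `G'` have
equal depth-2 ELENE encodings: node-centric ELENE encodings cannot distinguish strongly
regular graphs with equal parameters. -/
theorem srg_elene_two_eq_of_same_params {V V' : Type*} [Fintype V] [Fintype V']
    {G : SimpleGraph V} {G' : SimpleGraph V'} [DecidableRel G.Adj] [DecidableRel G'.Adj]
    {n d l m : ℕ}
    (h : G.IsSRGWith n d l m) (h' : G'.IsSRGWith n d l m) (hm : 1 ≤ m) :
    ∀ (v : V) (v' : V'), elene G 2 v = elene G' 2 v' := by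
  intro v v'
  rw [h.elene_two_eq_map_dist hm v, h'.elene_two_eq_map_dist hm v',
    h.map_dist_eq_map_dist h' hm v v']
end

section
/- For every pair of adjacent vertices u, v in the 4×4 Rook graph, the two common neighbors of u and v are adjacent to each other, so the subgraph induced on {u, v} ∪ (N(u) ∩ N(v)) has exactly 6 edges; whereas for every pair of adjacent vertices u, v in the Shrikhande graph, the two common neighbors of u and v are non-adjacent, so the corresponding induced subgraph has exactly 5 edges. Hence edge-centric ego-network intersection counts distinguish these two non-isomorphic strongly regular graphs with equal parameters (16, 6, 2, 2). -/
/-- The 4×4 Rook graph: the box (Cartesian) product `K₄ □ K₄` of two complete graphs on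
4 vertices. Its vertices are pairs `(a, b)` with `a b : Fin 4`, and `(a, b)` is adjacent
to `(c, d)` iff (`a = c` and `b ≠ d`) or (`b = d` and `a ≠ c`). -/
def rookGraph : SimpleGraph (Fin 4 × Fin 4) where
  Adj x y := (x.1 = y.1 ∧ x.2 ≠ y.2) ∨ (x.2 = y.2 ∧ x.1 ≠ y.1)
  symm := by
    constructor
    rintro x y (⟨h1, h2⟩ | ⟨h1, h2⟩)
    · exact Or.inl ⟨h1.symm, h2.symm⟩
    · exact Or.inr ⟨h1.symm, h2.symm⟩
  loopless := by
    constructor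
    rintro x (⟨-, h⟩ | ⟨-, h⟩) <;> exact h rfl

instance : DecidableRel rookGraph.Adj := fun x y =>
  inferInstanceAs (Decidable ((x.1 = y.1 ∧ x.2 ≠ y.2) ∨ (x.2 = y.2 ∧ x.1 ≠ y.1)))

/-- The connection set of the Shrikhande graph:
`S = {(1,0), (−1,0), (0,1), (0,−1), (1,1), (−1,−1)} ⊆ (ZMod 4) × (ZMod 4)`. -/
def shrikhandeS : Finset (ZMod 4 × ZMod 4) :=
  {(1, 0), (-1, 0), (0, 1), (0, -1), (1, 1), (-1, -1)}

/-- The Shrikhande graph: the Cayley graph on the group `(ZMod 4) × (ZMod 4)` with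
connection set `S = {(1,0), (−1,0), (0,1), (0,−1), (1,1), (−1,−1)}`; `x` is adjacent to
`y` iff `x - y ∈ S`. -/
def shrikhandeGraph : SimpleGraph (ZMod 4 × ZMod 4) where
  Adj x y := x - y ∈ shrikhandeS
  symm := by
    constructor
    intro x y h
    have hxy : y - x = -(x - y) := (neg_sub x y).symm
    rw [hxy]
    revert h
    have : ∀ z ∈ shrikhandeS, -z ∈ shrikhandeS := by decide
    exact this (x - y)
  loopless := by
    constructor
    intro x h
    rw [sub_self] at h
    revert h
    decide

instance : DecidableRel shrikhandeGraph.Adj := fun x y =>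
  inferInstanceAs (Decidable (x - y ∈ shrikhandeS))


/-!
In both graphs an edge `uv` has exactly `λ = 2` common neighbours `w₁, w₂`, so its ego-network
has four vertices, and every pair of them except possibly `w₁w₂` is adjacent: it has 6 or 5
edges according to whether `w₁w₂` is an edge. In the Rook graph the common neighbours of an
edge lie on the line through it, so the ego-network is a 4-clique. The Shrikhande graph has no
4-clique: by translation invariance such a clique may be assumed to contain `0`, and its other
three vertices would form a triangle inside the neighbourhood `S` of `0`, which induces a hexagon.
-/

namespace SimpleGraph

variable {V : Type*} {G H : SimpleGraph V} {u v : V}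

lemma isClique_union_commonNeighbors (hGH : G ≤ H) (huv : G.Adj u v)
    (hC : H.IsClique (G.commonNeighbors u v)) :
    H.IsClique ({u, v} ∪ G.commonNeighbors u v) := by
  rw [Set.insert_union, Set.singleton_union]
  refine (hC.insert fun w hw _ => hGH (G.mem_commonNeighbors.1 hw).2).insert ?_
  rintro w (rfl | hw) _
  exacts [hGH huv, hGH (G.mem_commonNeighbors.1 hw).1]

lemma CliqueFree.isIndepSet_commonNeighbors [DecidableEq V] (h : G.CliqueFree 4)
    (huv : G.Adj u v) : G.IsIndepSet (G.commonNeighbors u v) := by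
  intro w₁ hw₁ w₂ hw₂ _ hw
  rw [mem_commonNeighbors] at hw₁ hw₂
  exact h {u, v, w₁, w₂} <|
    (is3Clique_triple_iff.2 ⟨hw₁.2, hw₂.2, hw⟩).insert (by simp [huv, hw₁.1, hw₂.1])

lemma IsSRGWith.ncard_commonNeighbors [Fintype V] [DecidableRel G.Adj] {n k ℓ μ : ℕ}
    (h : G.IsSRGWith n k ℓ μ) (huv : G.Adj u v) : (G.commonNeighbors u v).ncard = ℓ := by
  rw [← Nat.card_coe_set_eq, Nat.card_eq_fintype_card, h.of_adj u v huv]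

section Finite

variable [Finite V]

lemma ncard_edgeSet_induce_of_isClique {s : Set V} (h : G.IsClique s) :
    (G.induce s).edgeSet.ncard = s.ncard.choose 2 := by
  classical
  have := Fintype.ofFinite V
  rw [induce_eq_top.2 h, ← Nat.card_coe_set_eq, Nat.card_eq_fintype_card, ← edgeFinset_card,
    card_edgeFinset_top_eq_card_choose_two, ← Nat.card_eq_fintype_card, Nat.card_coe_set_eq]

lemma ncard_edgeSet_induce_add_one_of_isClique_sup_edge {s : Set V} {a b : V}
    (ha : a ∈ s) (hb : b ∈ s) (hab : a ≠ b) (hn : ¬G.Adj a b) (h : (G ⊔ edge a b).IsClique s) :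
    (G.induce s).edgeSet.ncard + 1 = s.ncard.choose 2 := by
  classical
  have := Fintype.ofFinite V
  have hsup : (G ⊔ edge a b).induce s = G.induce s ⊔ edge ⟨a, ha⟩ ⟨b, hb⟩ := by
    ext x y
    simp [edge_adj, Subtype.ext_iff]
  rw [← ncard_edgeSet_induce_of_isClique h, hsup, ← Nat.card_coe_set_eq, ← Nat.card_coe_set_eq,
    Nat.card_eq_fintype_card, Nat.card_eq_fintype_card, ← edgeFinset_card, ← edgeFinset_card,
    card_edgeFinset_sup_edge]
  · simpa using hn
  · simpa using hab

lemma ncard_union_commonNeighbors (huv : G.Adj u v) :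
    ({u, v} ∪ G.commonNeighbors u v).ncard = (G.commonNeighbors u v).ncard + 2 := by
  rw [add_comm, Set.ncard_union_eq, Set.ncard_pair huv.ne]
  simp +contextual [Set.disjoint_left, mem_commonNeighbors, or_imp]

lemma ncard_edgeSet_induce_union_commonNeighbors_of_isClique (huv : G.Adj u v)
    (hC : G.IsClique (G.commonNeighbors u v)) :
    (G.induce ({u, v} ∪ G.commonNeighbors u v)).edgeSet.ncard
      = ((G.commonNeighbors u v).ncard + 2).choose 2 := by
  rw [ncard_edgeSet_induce_of_isClique (isClique_union_commonNeighbors le_rfl huv hC),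
    ncard_union_commonNeighbors huv]

lemma ncard_edgeSet_induce_union_commonNeighbors_of_isIndepSet (huv : G.Adj u v)
    (hC : (G.commonNeighbors u v).ncard = 2) (hI : G.IsIndepSet (G.commonNeighbors u v)) :
    (G.induce ({u, v} ∪ G.commonNeighbors u v)).edgeSet.ncard = 5 := by
  obtain ⟨w₁, w₂, hne, hpair⟩ := Set.ncard_eq_two.1 hC
  have hw₁ : w₁ ∈ G.commonNeighbors u v := hpair ▸ Set.mem_insert _ _
  have hw₂ : w₂ ∈ G.commonNeighbors u v := hpair ▸ Set.mem_insert_of_mem _ rfl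
  have hclique : (G ⊔ edge w₁ w₂).IsClique ({u, v} ∪ G.commonNeighbors u v) := by
    refine isClique_union_commonNeighbors le_sup_left huv ?_
    rw [hpair]
    exact (isClique_pair.2 fun h => (edge_adj ..).2 ⟨Or.inl ⟨rfl, rfl⟩, h⟩).mono le_sup_right
  have := ncard_edgeSet_induce_add_one_of_isClique_sup_edge (Set.mem_union_right _ hw₁)
    (Set.mem_union_right _ hw₂) hne (hI hw₁ hw₂ hne) hclique
  rw [ncard_union_commonNeighbors huv, hC] at this
  exact Nat.add_right_cancel this

end Finite

end SimpleGraph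

open SimpleGraph

lemma rookGraph_isClique_commonNeighbors {u v : Fin 4 × Fin 4} (huv : rookGraph.Adj u v) :
    rookGraph.IsClique (rookGraph.commonNeighbors u v) := by
  rintro w₁ hw₁ w₂ hw₂ hne
  simp only [mem_commonNeighbors, rookGraph] at huv hw₁ hw₂ ⊢
  grind

theorem rookGraph_isSRGWith : rookGraph.IsSRGWith 16 6 2 2 where
  card := rfl
  regular := by intro v; decide +revert
  of_adj := by decide
  of_not_adj := by intro v w; decide +revert

lemma shrikhandeGraph_adj_sub_right {x y z : ZMod 4 × ZMod 4} :
    shrikhandeGraph.Adj (x - z) (y - z) ↔ shrikhandeGraph.Adj x y := by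
  simp only [shrikhandeGraph, sub_sub_sub_cancel_right]

lemma shrikhandeGraph_not_adj_of_mem_shrikhandeS :
    ∀ x ∈ shrikhandeS, ∀ y ∈ shrikhandeS, ∀ z ∈ shrikhandeS,
      shrikhandeGraph.Adj x y → shrikhandeGraph.Adj x z → ¬shrikhandeGraph.Adj y z := by
  decide

lemma shrikhandeGraph_cliqueFree_four : shrikhandeGraph.CliqueFree 4 := by
  intro t ht
  obtain ⟨a, b, c, d, hab, hac, had, hbc, hbd, hcd, rfl⟩ := Finset.card_eq_four.1 ht.card_eq
  have h := ht.isClique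
  simp only [Finset.coe_insert, Finset.coe_singleton, isClique_insert, Set.mem_insert_iff,
    Set.mem_singleton_iff, forall_eq_or_imp, forall_eq, ne_eq, hab, hac, had, hbc, hbd, hcd,
    not_false_eq_true, forall_const, isClique_singleton, true_and] at h
  obtain ⟨⟨hcd, hbc, hbd⟩, hab, hac, had⟩ := h
  exact shrikhandeGraph_not_adj_of_mem_shrikhandeS (b - a) hab.symm (c - a) hac.symm (d - a)
    had.symm (shrikhandeGraph_adj_sub_right.2 hbc) (shrikhandeGraph_adj_sub_right.2 hbd)
    (shrikhandeGraph_adj_sub_right.2 hcd)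

theorem shrikhandeGraph_isSRGWith : shrikhandeGraph.IsSRGWith 16 6 2 2 where
  card := rfl
  regular := by intro v; decide +revert
  of_adj := by decide
  of_not_adj := by intro v w; decide +revert

/-- For adjacent `u, v` in the 4×4 Rook graph, the two common neighbors
of `u` and `v` are adjacent to each other, and the subgraph induced on
`{u, v} ∪ (N(u) ∩ N(v))` has exactly 6 edges; whereas for adjacent `u, v` in the
Shrikhande graph, the two common neighbors are non-adjacent, and the corresponding
induced subgraph has exactly 5 edges. Hence edge-centric ego-network intersection counts
distinguish these two strongly regular graphs with equal parameters `(16, 6, 2, 2)`. -/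
theorem rook_shrikhande_edge_counts :
    (∀ u v : Fin 4 × Fin 4, rookGraph.Adj u v →
      (∀ w₁ ∈ rookGraph.neighborSet u ∩ rookGraph.neighborSet v,
        ∀ w₂ ∈ rookGraph.neighborSet u ∩ rookGraph.neighborSet v,
          w₁ ≠ w₂ → rookGraph.Adj w₁ w₂) ∧
      (rookGraph.induce
        ({u, v} ∪ (rookGraph.neighborSet u ∩ rookGraph.neighborSet v))).edgeSet.ncard
        = 6) ∧
    (∀ u v : ZMod 4 × ZMod 4, shrikhandeGraph.Adj u v →
      (∀ w₁ ∈ shrikhandeGraph.neighborSet u ∩ shrikhandeGraph.neighborSet v,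
        ∀ w₂ ∈ shrikhandeGraph.neighborSet u ∩ shrikhandeGraph.neighborSet v,
          w₁ ≠ w₂ → ¬ shrikhandeGraph.Adj w₁ w₂) ∧
      (shrikhandeGraph.induce
        ({u, v} ∪ (shrikhandeGraph.neighborSet u ∩ shrikhandeGraph.neighborSet v))).edgeSet.ncard
        = 5) := by
  simp only [← commonNeighbors_eq]
  refine ⟨fun u v huv => ?_, fun u v huv => ?_⟩
  · have hC := rookGraph_isClique_commonNeighbors huv
    refine ⟨hC, ?_⟩
    rw [ncard_edgeSet_induce_union_commonNeighbors_of_isClique huv hC,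
      rookGraph_isSRGWith.ncard_commonNeighbors huv]
    rfl
  · have hI := shrikhandeGraph_cliqueFree_four.isIndepSet_commonNeighbors huv
    exact ⟨hI, ncard_edgeSet_induce_union_commonNeighbors_of_isIndepSet huv
      (shrikhandeGraph_isSRGWith.ncard_commonNeighbors huv) hI⟩
end
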